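/- Let L(Q) = Π_{u=1}^{M} Π_{s,r} (exp(Q Δt_u))_{sr}^{N_{sr}(u)} be the likelihood of a discretely observed CTMC, where all N_{sr}(u) are nonnegative integers and exp(Q Δt_u)_{sr} > 0 whenever N_{sr}(u) > 0. Then for an allowed pair (α,β), ∂ log L / ∂ q_{αβ} = Σ_{u,s,r} N_{sr}(u) · (exp(C^{(αβ)} Δt_u))_{s, h+r} / (exp(Q Δt_u))_{sr}, where C^{(αβ)} = [[Q, e_α e_β^T − e_α e_α^T],[0, Q]]. -/

import Mathlib

/-!
For any scalar `c`, the map `(P, S) ↦ [[P, c • (S - P)], [0, S]]` is a continuous ring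
homomorphism, so it commutes with `exp`. Taking `P = A`, `S = A + y • E`, `c = y⁻¹` shows that the
difference quotient `y⁻¹ • (exp (A + y • E) - exp A)` is the upper-right block of
`exp [[A, E], [0, A + y • E]]`, which tends to the upper-right block of `exp [[A, E], [0, A]]` as
`y → 0` by continuity of `exp`. The gradient formula then follows by the chain rule for `log`,
after pulling the factor `Δt u` inside the blocks.
-/

open NormedSpace

namespace Matrix

variable {n : Type*} [Fintype n] [DecidableEq n]

def fromBlocksSmulSubRingHom {α : Type*} [CommRing α] (c : α) :
    Matrix n n α × Matrix n n α →+* Matrix (n ⊕ n) (n ⊕ n) α where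
  toFun p := fromBlocks p.1 (c • (p.2 - p.1)) 0 p.2
  map_one' := by simp [fromBlocks_one]
  map_mul' p p' := by
    simp only [Prod.fst_mul, Prod.snd_mul, fromBlocks_multiply, mul_zero, zero_mul, add_zero,
      zero_add, Matrix.mul_smul, Matrix.smul_mul, mul_sub, sub_mul, ← smul_add]
    congr 2; abel
  map_zero' := by simp
  map_add' p p' := by
    simp only [Prod.fst_add, Prod.snd_add, fromBlocks_add, add_zero, ← smul_add]
    congr 2; abel

variable {𝕂 : Type*} [RCLike 𝕂]

theorem exp_fromBlocks_smul_sub (c : 𝕂) (P S : Matrix n n 𝕂) :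
    exp (fromBlocks P (c • (S - P)) 0 S) =
      fromBlocks (exp P) (c • (exp S - exp P)) 0 (exp S) := by
  -- Under the operator norm the completeness instances are not found by unification.
  open scoped Norms.Operator in
  have hψ := @map_exp _ _ _ _ CompleteSpace.prod _ _ _ _ _ (fromBlocksSmulSubRingHom c)
    (continuous_fst.matrix_fromBlocks ((continuous_snd.sub continuous_fst).const_smul c)
      continuous_const continuous_snd) (P, S)
  open scoped Norms.Operator in
  have hprod : exp (P, S) = (exp P, exp S) := Prod.ext (Prod.fst_exp _) (Prod.snd_exp _)
  calc exp (fromBlocks P (c • (S - P)) 0 S) = fromBlocksSmulSubRingHom c (exp (P, S)) := hψ.symm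
    _ = fromBlocksSmulSubRingHom c (exp P, exp S) := congrArg _ hprod

theorem smul_exp_add_smul_sub_exp (A E : Matrix n n 𝕂) {y : 𝕂} (hy : y ≠ 0) :
    y⁻¹ • (exp (A + y • E) - exp A) = (exp (fromBlocks A E 0 (A + y • E))).toBlocks₁₂ := by
  have h := exp_fromBlocks_smul_sub y⁻¹ A (A + y • E)
  rw [add_sub_cancel_left, smul_smul, inv_mul_cancel₀ hy, one_smul] at h
  rw [h, toBlocks_fromBlocks₁₂]

theorem hasDerivAt_exp_add_smul_apply (A E : Matrix n n 𝕂) (s r : n) :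
    HasDerivAt (fun y : 𝕂 => exp (A + y • E) s r)
      (exp (fromBlocks A E 0 A) (Sum.inl s) (Sum.inr r)) 0 := by
  rw [hasDerivAt_iff_tendsto_slope]
  have hblock : Continuous fun y : 𝕂 =>
      exp (fromBlocks A E 0 (A + y • E)) (Sum.inl s) (Sum.inr r) := by
    have hexp : Continuous (exp : Matrix (n ⊕ n) (n ⊕ n) 𝕂 → _) := by
      open scoped Norms.Operator in exact @exp_continuous _ _ _ (instCompleteSpace _ _ 𝕂)
    exact (continuous_apply_apply _ _).comp (hexp.comp
      (continuous_const.matrix_fromBlocks continuous_const continuous_const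
        (continuous_const.add (continuous_id.smul continuous_const))))
  have hslope : ∀ y ≠ (0 : 𝕂), slope (fun y : 𝕂 => exp (A + y • E) s r) 0 y =
      exp (fromBlocks A E 0 (A + y • E)) (Sum.inl s) (Sum.inr r) := fun y hy => by
    simpa [slope_def_module, toBlocks₁₂] using congrFun₂ (smul_exp_add_smul_sub_exp A E hy) s r
  have hlim := (hblock.tendsto 0).mono_left (nhdsWithin_le_nhds (s := {0}ᶜ))
  rw [zero_smul, add_zero] at hlim
  exact hlim.congr' (eventually_nhdsWithin_of_forall fun y hy => (hslope y hy).symm)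

end Matrix

theorem gradient_logLikelihood_ctmc_general {h M : ℕ} (Q : Matrix (Fin h) (Fin h) ℝ) (α β : Fin h)
    (N : Fin M → Fin h → Fin h → ℕ) (Δt : Fin M → ℝ)
    (hexp : ∀ u s r, 0 < N u s r →
      0 < (exp (Δt u • Q) : Matrix (Fin h) (Fin h) ℝ) s r) :
    HasDerivAt
      (fun x : ℝ => ∑ u, ∑ s, ∑ r, (N u s r : ℝ) *
        Real.log ((exp (Δt u • (Q + (x - Q α β) •
          (Matrix.single α β (1:ℝ) - Matrix.single α α 1)))
            : Matrix (Fin h) (Fin h) ℝ) s r))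
      (∑ u, ∑ s, ∑ r, (N u s r : ℝ) *
        (exp (Δt u • Matrix.fromBlocks Q
            (Matrix.single α β (1:ℝ) - Matrix.single α α 1) 0 Q)
          : Matrix (Fin h ⊕ Fin h) (Fin h ⊕ Fin h) ℝ) (Sum.inl s) (Sum.inr r) /
        (exp (Δt u • Q) : Matrix (Fin h) (Fin h) ℝ) s r)
      (Q α β) := by
  set D : Matrix (Fin h) (Fin h) ℝ := Matrix.single α β 1 - Matrix.single α α 1
  refine .fun_sum fun u _ => .fun_sum fun s _ => .fun_sum fun r _ => ?_
  have hentry : HasDerivAt (fun x : ℝ => exp (Δt u • (Q + (x - Q α β) • D)) s r)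
      (exp (Δt u • Matrix.fromBlocks Q D 0 Q) (Sum.inl s) (Sum.inr r)) (Q α β) := by
    have := HasDerivAt.comp_sub_const (Q α β) (Q α β)
      ((sub_self (Q α β)).symm ▸ Matrix.hasDerivAt_exp_add_smul_apply (Δt u • Q) (Δt u • D) s r)
    simpa only [sub_self, smul_add, smul_comm (Δt u), Matrix.fromBlocks_smul, smul_zero] using this
  rcases (N u s r).eq_zero_or_pos with hN | hN
  · simpa [hN] using hasDerivAt_const (Q α β) (0 : ℝ)
  · have hlog := (hentry.log (by simpa using (hexp u s r hN).ne')).const_mul (N u s r : ℝ)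
    simpa [mul_div_assoc] using hlog

/-- Gradient of the log-likelihood of a discretely observed CTMC: with
`L(Q) = Π_u Π_{s,r} (exp(Q Δt_u))_{sr}^{N_{sr}(u)}` and the allowed pair `(α,β)` (diagonal
compensated so rows sum to zero), `∂ log L / ∂ q_{αβ}` equals
`Σ_{u,s,r} N_{sr}(u) (exp(C^{(αβ)} Δt_u))_{s,h+r} / (exp(Q Δt_u))_{sr}` where
`C^{(αβ)} = [[Q, e_α e_β^T − e_α e_α^T], [0, Q]]`. -/
theorem gradient_logLikelihood_ctmc {h M : ℕ} (Q : Matrix (Fin h) (Fin h) ℝ)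
    (hoff : ∀ i j, i ≠ j → 0 ≤ Q i j) (hrow : ∀ i, ∑ j, Q i j = 0)
    (α β : Fin h) (hαβ : α ≠ β) (hpos : 0 < Q α β)
    (N : Fin M → Fin h → Fin h → ℕ) (Δt : Fin M → ℝ) (hΔt : ∀ u, 0 < Δt u)
    (hexp : ∀ u s r, 0 < N u s r →
      0 < (exp (Δt u • Q) : Matrix (Fin h) (Fin h) ℝ) s r) :
    HasDerivAt
      (fun x : ℝ => ∑ u, ∑ s, ∑ r, (N u s r : ℝ) *
        Real.log ((exp (Δt u • (Q + (x - Q α β) •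
          (Matrix.single α β (1:ℝ) - Matrix.single α α 1)))
            : Matrix (Fin h) (Fin h) ℝ) s r))
      (∑ u, ∑ s, ∑ r, (N u s r : ℝ) *
        (exp (Δt u • Matrix.fromBlocks Q
            (Matrix.single α β (1:ℝ) - Matrix.single α α 1) 0 Q)
          : Matrix (Fin h ⊕ Fin h) (Fin h ⊕ Fin h) ℝ) (Sum.inl s) (Sum.inr r) /
        (exp (Δt u • Q) : Matrix (Fin h) (Fin h) ℝ) s r)
      (Q α β) :=
  gradient_logLikelihood_ctmc_general Q α β N Δt hexp
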